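/- arXiv:2009.06512 — 3 statements merged into one kernel-verified Lean document; each statement's English description precedes it below -/
import Mathlib

section
/- Sphere-packing bound for partially-stuck-at masking codes with non-overlapping errors: if C is a set of M words in F_q^n, each satisfying the partially-stuck constraints c_{φ_i} ≥ s_{φ_i} at u distinct positions, and the Hamming balls of radius t restricted to the n-u non-stuck coordinates (i.e., sets of words obtained by changing at most t entries outside the stuck positions) around distinct codewords are pairwise disjoint, then M · ∑_{j=0}^{t} binom(n-u, j)(q-1)^j ≤ q^{n-u} · ∏_{i=0}^{u-1}(q - s_{φ_i}). -/
open Finset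

private def Dset {q n : ℕ} (c : Fin n → Fin q) (A : Finset (Fin n)) : Finset (Fin n → Fin q) :=
  Fintype.piFinset (fun i => if i ∈ A then {c i}ᶜ else {c i})

private lemma mem_Dset {q n : ℕ} (c : Fin n → Fin q) (A : Finset (Fin n)) (y : Fin n → Fin q) :
    y ∈ Dset c A ↔ (Finset.univ.filter (fun i => y i ≠ c i)) = A := by
  simp only [Dset, Fintype.mem_piFinset]
  constructor
  · intro h; ext i
    specialize h i
    by_cases hi : i ∈ A <;> simp [hi] at h <;> simp [hi, h]
  · intro h i
    by_cases hi : i ∈ A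
    · have : y i ≠ c i := by rw [← h] at hi; simpa using hi
      simp [hi, this]
    · have : ¬ y i ≠ c i := by rw [← h] at hi; simpa using hi
      simp [hi, not_not.mp this]

private lemma card_Dset {q n : ℕ} (c : Fin n → Fin q) (A : Finset (Fin n)) :
    (Dset c A).card = (q - 1) ^ A.card := by
  rw [Dset, Fintype.card_piFinset]
  have : ∀ i : Fin n, (if i ∈ A then ({c i}ᶜ : Finset (Fin q)) else {c i}).card
      = if i ∈ A then q - 1 else 1 := by
    intro i
    by_cases hi : i ∈ A <;> simp [hi, Finset.card_compl]
  simp_rw [this]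
  rw [Finset.prod_ite_mem, Finset.univ_inter, Finset.prod_const]

/-- Sphere-packing bound for partially-stuck-at masking codes, non-overlapping errors. -/
theorem stmt_1 (q n u t : ℕ) (φ : Fin u ↪ Fin n) (s : Fin u → Fin q)
    (C : Finset (Fin n → Fin q))
    (hC : ∀ c ∈ C, ∀ i, (s i : ℕ) ≤ (c (φ i) : ℕ))
    (hdisj : ∀ c ∈ C, ∀ c' ∈ C, c ≠ c' →
      Disjoint
        ((Finset.univ : Finset (Fin n → Fin q)).filter
          (fun y => (∀ i, y (φ i) = c (φ i)) ∧ hammingDist y c ≤ t))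
        ((Finset.univ : Finset (Fin n → Fin q)).filter
          (fun y => (∀ i, y (φ i) = c' (φ i)) ∧ hammingDist y c' ≤ t))) :
    C.card * ∑ j ∈ Finset.range (t + 1), (n - u).choose j * (q - 1) ^ j
      ≤ q ^ (n - u) * ∏ i, (q - (s i : ℕ)) := by
  classical
  set T : Finset (Fin n) := (Finset.univ.map φ)ᶜ with hT
  have hTcard : T.card = n - u := by
    simp [hT, Finset.card_compl]
  set B : (Fin n → Fin q) → Finset (Fin n → Fin q) := fun c =>
    (Finset.univ : Finset (Fin n → Fin q)).filter
      (fun y => (∀ i, y (φ i) = c (φ i)) ∧ hammingDist y c ≤ t) with hB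
  -- Ball decomposition
  have hBdec : ∀ c : Fin n → Fin q,
      B c = ((T.powerset).filter (fun A => A.card ≤ t)).biUnion (Dset c) := by
    intro c
    ext y
    simp only [hB, Finset.mem_filter, Finset.mem_univ, true_and, Finset.mem_biUnion,
      Finset.mem_powerset, mem_Dset]
    constructor
    · rintro ⟨h1, h2⟩
      refine ⟨Finset.univ.filter (fun i => y i ≠ c i), ⟨?_, ?_⟩, rfl⟩
      · intro i hi
        simp only [Finset.mem_filter, Finset.mem_univ, true_and] at hi
        simp only [hT, Finset.mem_compl, Finset.mem_map, Finset.mem_univ, true_and]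
        rintro ⟨j, rfl⟩
        exact hi (h1 j)
      · exact h2
    · rintro ⟨A, ⟨hA1, hA2⟩, rfl⟩
      constructor
      · intro j
        by_contra hne
        have : φ j ∈ T := hA1 (by simp [hne])
        simp [hT] at this
      · exact hA2
  -- Ball cardinality
  have hBcard : ∀ c : Fin n → Fin q,
      (B c).card = ∑ j ∈ Finset.range (t + 1), (n - u).choose j * (q - 1) ^ j := by
    intro c
    rw [hBdec c, Finset.card_biUnion]
    · have hsplit : (T.powerset).filter (fun A => A.card ≤ t)
          = (Finset.range (t + 1)).biUnion (fun j => T.powersetCard j) := by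
        ext A
        simp only [Finset.mem_filter, Finset.mem_powerset, Finset.mem_biUnion,
          Finset.mem_range, Finset.mem_powersetCard, Nat.lt_succ_iff]
        constructor
        · rintro ⟨h1, h2⟩; exact ⟨A.card, h2, h1, rfl⟩
        · rintro ⟨j, hj, h1, rfl⟩; exact ⟨h1, hj⟩
      rw [hsplit, Finset.sum_biUnion]
      · refine Finset.sum_congr rfl fun j _ => ?_
        rw [Finset.sum_congr rfl (fun A hA => ?_), Finset.sum_const, Finset.card_powersetCard,
          hTcard, smul_eq_mul]
        · rw [card_Dset, (Finset.mem_powersetCard.mp hA).2]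
      · intro a _ b _ hab
        simp only [Finset.disjoint_left, Finset.mem_powersetCard]
        rintro A ⟨_, rfl⟩ ⟨_, h2⟩
        exact hab h2
    · intro A hA A' hA' hne
      simp only [Finset.disjoint_left, mem_Dset]
      rintro y rfl h
      exact hne h
  -- The ambient set
  set G : Fin n → Finset (Fin q) := fun i =>
    if h : ∃ j, φ j = i then Finset.Ici (s h.choose) else Finset.univ with hG
  have hsub : C.biUnion B ⊆ Fintype.piFinset G := by
    intro y hy
    rw [Finset.mem_biUnion] at hy
    obtain ⟨c, hc, hyc⟩ := hy
    simp only [hB, Finset.mem_filter] at hyc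
    obtain ⟨_, h1, _⟩ := hyc
    rw [Fintype.mem_piFinset]
    intro i
    simp only [hG]
    split
    · next h =>
      rw [Finset.mem_Ici, Fin.le_def]
      have hspec := h.choose_spec
      have hyc : y i = c i := by rw [← hspec]; exact h1 h.choose
      rw [hyc]
      have := hC c hc h.choose
      rwa [hspec] at this
    · exact Finset.mem_univ _
  have hGcard : (Fintype.piFinset G).card = q ^ (n - u) * ∏ i, (q - (s i : ℕ)) := by
    rw [Fintype.card_piFinset, ← Finset.prod_mul_prod_compl (Finset.univ.map φ), ← hT]
    have h1 : ∏ i ∈ Finset.univ.map φ, (G i).card = ∏ i, (q - (s i : ℕ)) := by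
      rw [Finset.prod_map]
      refine Finset.prod_congr rfl fun j _ => ?_
      have h : ∃ j', φ j' = φ j := ⟨j, rfl⟩
      simp only [hG, Function.Embedding.coeFn_mk, dif_pos h]
      rw [Fin.card_Ici]
      congr 2
      exact congrArg s (φ.injective h.choose_spec)
    have h2 : ∏ i ∈ T, (G i).card = q ^ (n - u) := by
      rw [← hTcard, ← Finset.prod_const]
      refine Finset.prod_congr rfl fun i hi => ?_
      have : ¬ ∃ j, φ j = i := by
        simp only [hT, Finset.mem_compl, Finset.mem_map, Finset.mem_univ, true_and] at hi
        exact hi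
      simp [hG, dif_neg this]
    rw [h1, h2, mul_comm]
  calc C.card * ∑ j ∈ Finset.range (t + 1), (n - u).choose j * (q - 1) ^ j
      = ∑ c ∈ C, (B c).card := by
        rw [Finset.sum_congr rfl (fun c _ => hBcard c), Finset.sum_const, smul_eq_mul]
    _ = (C.biUnion B).card := (Finset.card_biUnion hdisj).symm
    _ ≤ (Fintype.piFinset G).card := Finset.card_le_card hsub
    _ = q ^ (n - u) * ∏ i, (q - (s i : ℕ)) := hGcard
end

section
/- Pigeonhole masking lemma: let λ ≥ 2, let F = {a ∈ F_{2^λ} : a_0 = 0} be the set of elements whose coordinate on the basis element 1 (with respect to a fixed F_2-basis 1, x, ..., x^{λ-1} of F_{2^λ}) is zero, so |F| = 2^{λ-1}. For any vector v ∈ F_{2^λ}^u, there exists z ∈ F such that the vector v + (z+1)·(1,...,1) has at most ⌊u/2^{λ-1}⌋ entries lying in the subfield F_2 = {0,1}. -/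
open scoped Classical

/-- Pigeonhole masking lemma: for `λ ≥ 2` and the hyperplane
`F = {a : a₀ = 0}` of `F_{2^λ}` (w.r.t. an `F_2`-basis whose 0-th element is `1`),
for any `v ∈ F_{2^λ}^u` there is `z ∈ F` such that `v + (z+1)·1` has at most
`⌊u / 2^(λ-1)⌋` entries in `F_2 = {0, 1}`. -/
theorem stmt_3 (lam u : ℕ) (hlam : 2 ≤ lam)
    (K : Type) [Field K] [Fintype K] [Algebra (ZMod 2) K]
    (b : Module.Basis (Fin lam) (ZMod 2) K) (hb : b ⟨0, by omega⟩ = 1)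
    (v : Fin u → K) :
    ∃ z : K, b.repr z ⟨0, by omega⟩ = 0 ∧
      ((Finset.univ : Finset (Fin u)).filter
        (fun i => v i + (z + 1) = 0 ∨ v i + (z + 1) = 1)).card
        ≤ u / 2 ^ (lam - 1) := by
  haveI : CharP K 2 := charP_of_injective_algebraMap
    (algebraMap (ZMod 2) K).injective 2
  have h2 : (2 : K) = 0 := CharP.cast_eq_zero K 2
  set i0 : Fin lam := ⟨0, by omega⟩ with hi0
  set f : K → ZMod 2 := fun z => b.repr z i0 with hf
  have hfadd : ∀ a c : K, f (a + c) = f a + f c := by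
    intro a c; simp [hf, map_add]
  have hf1 : f 1 = 1 := by
    rw [hf]; simp only [← hb, Module.Basis.repr_self, Finsupp.single_eq_same]
  have hzm : ∀ x : ZMod 2, x = 0 ∨ x = 1 := by decide
  have hzm2 : ∀ x : ZMod 2, x ≠ 0 ↔ x = 1 := by decide
  set F : Finset K := Finset.univ.filter (fun z => f z = 0) with hF
  have hmemF : ∀ z : K, z ∈ F ↔ f z = 0 := by
    intro z; simp [hF]
  have hfadd1 : ∀ a : K, f (a + 1) = f a + 1 := by
    intro a; rw [hfadd, hf1]
  -- cardinality of F
  have hcardK : Fintype.card K = 2 ^ lam := by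
    have := Module.card_fintype b
    simpa [ZMod.card] using this
  have hcompl : Fᶜ.card = F.card := by
    apply Finset.card_bij' (fun z _ => z + 1) (fun z _ => z + 1)
    · intro a _; have h : a + 1 + 1 = a + 2 := by ring
      rw [h, h2, add_zero]
    · intro a _; have h : a + 1 + 1 = a + 2 := by ring
      rw [h, h2, add_zero]
    · intro a ha
      rw [Finset.mem_compl, hmemF] at ha
      rw [hmemF, hfadd1, (hzm2 _).mp ha]; decide
    · intro a ha
      rw [hmemF] at ha
      rw [Finset.mem_compl, hmemF, hfadd1, ha]; decide
  have hFcard : F.card = 2 ^ (lam - 1) := by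
    have h1 : F.card + Fᶜ.card = Fintype.card K := Finset.card_add_card_compl F
    rw [hcompl, hcardK] at h1
    have : 2 ^ lam = 2 * 2 ^ (lam - 1) := by
      rw [← pow_succ']
      congr 1
      omega
    omega
  -- for each i, exactly one z in F works
  have hone : ∀ i : Fin u,
      (F.filter (fun z => v i + (z + 1) = 0 ∨ v i + (z + 1) = 1)).card = 1 := by
    intro i
    have hcond : ∀ z : K, (v i + (z + 1) = 0 ∨ v i + (z + 1) = 1) ↔
        (z = v i + 1 ∨ z = v i) := by
      intro z
      constructor
      · rintro (h | h)
        · left; linear_combination h - (v i + 1) * h2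
        · right; linear_combination h - (v i) * h2
      · rintro (h | h)
        · left; rw [h]; linear_combination (v i + 1) * h2
        · right; rw [h]; linear_combination (v i) * h2
    rcases hzm (f (v i)) with h0 | h1
    · have : F.filter (fun z => v i + (z + 1) = 0 ∨ v i + (z + 1) = 1) = {v i} := by
        ext z
        rw [Finset.mem_filter, hmemF, hcond, Finset.mem_singleton]
        constructor
        · rintro ⟨hz, (h | h)⟩
          · exfalso; rw [h, hfadd1, h0] at hz; exact one_ne_zero hz
          · exact h
        · intro h; exact ⟨by rw [h]; exact h0, Or.inr h⟩
      rw [this, Finset.card_singleton]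
    · have : F.filter (fun z => v i + (z + 1) = 0 ∨ v i + (z + 1) = 1) = {v i + 1} := by
        ext z
        rw [Finset.mem_filter, hmemF, hcond, Finset.mem_singleton]
        constructor
        · rintro ⟨hz, (h | h)⟩
          · exact h
          · exfalso; rw [h, h1] at hz; exact one_ne_zero hz
        · intro h
          refine ⟨?_, Or.inl h⟩
          rw [h, hfadd1, h1]; decide
      rw [this, Finset.card_singleton]
  -- double counting
  have hsum : ∑ z ∈ F, ((Finset.univ : Finset (Fin u)).filter
        (fun i => v i + (z + 1) = 0 ∨ v i + (z + 1) = 1)).card = u := by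
    have : ∀ z ∈ F, ((Finset.univ : Finset (Fin u)).filter
        (fun i => v i + (z + 1) = 0 ∨ v i + (z + 1) = 1)).card
        = ∑ i : Fin u, if (v i + (z + 1) = 0 ∨ v i + (z + 1) = 1) then 1 else 0 := by
      intro z _; rw [Finset.card_filter]
    rw [Finset.sum_congr rfl this, Finset.sum_comm]
    have : ∀ i : Fin u, (∑ z ∈ F, if (v i + (z + 1) = 0 ∨ v i + (z + 1) = 1)
        then 1 else 0) = 1 := by
      intro i; rw [← Finset.card_filter, hone i]
    rw [Finset.sum_congr rfl (fun i _ => this i)]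
    simp
  -- pigeonhole
  by_contra hcon
  push_neg at hcon
  have hbig : ∀ z ∈ F, u / 2 ^ (lam - 1) + 1 ≤
      ((Finset.univ : Finset (Fin u)).filter
        (fun i => v i + (z + 1) = 0 ∨ v i + (z + 1) = 1)).card := by
    intro z hz
    have := hcon z ((hmemF z).mp hz)
    omega
  have hsum2 : F.card * (u / 2 ^ (lam - 1) + 1) ≤ u := by
    calc F.card * (u / 2 ^ (lam - 1) + 1)
        = ∑ _z ∈ F, (u / 2 ^ (lam - 1) + 1) := by
          rw [Finset.sum_const, smul_eq_mul]
      _ ≤ ∑ z ∈ F, ((Finset.univ : Finset (Fin u)).filter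
            (fun i => v i + (z + 1) = 0 ∨ v i + (z + 1) = 1)).card :=
          Finset.sum_le_sum hbig
      _ = u := hsum
  rw [hFcard] at hsum2
  have hpos : 0 < 2 ^ (lam - 1) := Nat.pow_pos (by norm_num)
  have hdm := Nat.div_add_mod u (2 ^ (lam - 1))
  have hlt := Nat.mod_lt u hpos
  nlinarith [hsum2, hdm, hlt]
end

section
/- Sphere-packing bound for overlapping errors: let C ⊆ F_q^n be a set of M words satisfying c_{φ_i} ≥ s_{φ_i} at u distinct stuck positions with s_{φ_i} < q-1 for all i. Suppose the error sets of radius t in the overlapping model around distinct codewords are pairwise disjoint, where an error of weight j changes j_1 coordinates among the n-u non-stuck positions arbitrarily (to one of q-1 other values each) and j - j_1 coordinates among the stuck positions to values strictly above the stuck level (q-1-s_{φ_i} choices at stuck position φ_i). Then M · ∑_{j=0}^{t} ∑_{j_1=0}^{j} binom(n-u, j_1)(q-1)^{j_1} · ∑_{J ⊆ stuck positions, |J| = j-j_1} ∏_{i∈J} (q-1-s_{φ_i}) ≤ q^{n-u} ∏_{i=0}^{u-1}(q-s_{φ_i}). -/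
open Finset

lemma aux_filter_le_card (q k : ℕ) :
    ((univ : Finset (Fin q)).filter fun v : Fin q => k ≤ (v : ℕ)).card = q - k := by
  rw [← Nat.card_Ico k q]
  apply card_bij (fun (v : Fin q) _ => (v : ℕ))
  · intro a ha
    simp only [mem_filter, mem_univ, true_and] at ha
    exact mem_Ico.mpr ⟨ha, a.isLt⟩
  · intro a _ b _ h
    exact Fin.val_injective h
  · intro m hm
    rw [mem_Ico] at hm
    exact ⟨⟨m, hm.2⟩, by simp [hm.1], rfl⟩

lemma aux_space_card (q n u : ℕ) (φ : Fin u ↪ Fin n) (s : Fin u → Fin q) :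
    ((univ : Finset (Fin n → Fin q)).filter
        (fun y => ∀ i, (s i : ℕ) ≤ (y (φ i) : ℕ))).card
      = q ^ (n - u) * ∏ i, (q - (s i : ℕ)) := by
  classical
  have hT : (univ : Finset (Fin n → Fin q)).filter
        (fun y => ∀ i, (s i : ℕ) ≤ (y (φ i) : ℕ))
      = Fintype.piFinset (fun x => (univ : Finset (Fin q)).filter
          (fun v : Fin q => ∀ i, φ i = x → (s i : ℕ) ≤ (v : ℕ))) := by
    ext y
    simp only [mem_filter, mem_univ, true_and, Fintype.mem_piFinset]
    constructor
    · rintro h x i rfl; exact h i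
    · intro h i; exact h (φ i) i rfl
  rw [hT, Fintype.card_piFinset]
  rw [← prod_mul_prod_compl (univ.image φ)]
  have h1 : ∏ x ∈ univ.image φ, ((univ : Finset (Fin q)).filter
        (fun v : Fin q => ∀ i, φ i = x → (s i : ℕ) ≤ (v : ℕ))).card
      = ∏ i, (q - (s i : ℕ)) := by
    rw [prod_image (fun a _ b _ h => φ.injective h)]
    apply prod_congr rfl
    intro i0 _
    have he : ((univ : Finset (Fin q)).filter
          (fun v : Fin q => ∀ i, φ i = φ i0 → (s i : ℕ) ≤ (v : ℕ)))
        = (univ : Finset (Fin q)).filter (fun v : Fin q => (s i0 : ℕ) ≤ (v : ℕ)) := by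
      apply filter_congr
      intro v _
      constructor
      · intro h; exact h i0 rfl
      · intro h i hi
        obtain rfl := φ.injective hi
        exact h
    rw [he, aux_filter_le_card]
  have h2 : ∏ x ∈ (univ.image φ)ᶜ, ((univ : Finset (Fin q)).filter
        (fun v : Fin q => ∀ i, φ i = x → (s i : ℕ) ≤ (v : ℕ))).card
      = q ^ (n - u) := by
    have hc : ∀ x ∈ (univ.image φ)ᶜ, ((univ : Finset (Fin q)).filter
        (fun v : Fin q => ∀ i, φ i = x → (s i : ℕ) ≤ (v : ℕ))).card = q := by
      intro x hx
      rw [mem_compl] at hx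
      have : ((univ : Finset (Fin q)).filter
          (fun v : Fin q => ∀ i, φ i = x → (s i : ℕ) ≤ (v : ℕ))) = univ := by
        apply filter_true_of_mem
        intro v _ i hi
        exact absurd (hi ▸ mem_image_of_mem φ (mem_univ i)) hx
      rw [this, card_univ, Fintype.card_fin]
    rw [prod_congr rfl hc, prod_const]
    congr 1
    rw [card_compl, card_image_of_injective _ φ.injective, card_univ,
      Fintype.card_fin, Fintype.card_fin]
  rw [h1, h2, mul_comm]

lemma aux_ball_card (q n u t : ℕ) (φ : Fin u ↪ Fin n) (s : Fin u → Fin q)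
    (c : Fin n → Fin q) (hc : ∀ i, (s i : ℕ) ≤ (c (φ i) : ℕ)) :
    (∑ j ∈ Finset.range (t + 1), ∑ j1 ∈ Finset.range (j + 1),
        (n - u).choose j1 * (q - 1) ^ j1 *
          ∑ J ∈ Finset.powersetCard (j - j1) (Finset.univ : Finset (Fin u)),
            ∏ i ∈ J, (q - 1 - (s i : ℕ)))
      ≤ ((Finset.univ : Finset (Fin n → Fin q)).filter
          (fun y => (∀ i, (s i : ℕ) ≤ (y (φ i) : ℕ)) ∧ hammingDist y c ≤ t)).card := by
  classical
  set N : Finset (Fin n) := (univ.image φ)ᶜ with hNdef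
  have hN : N.card = n - u := by
    rw [hNdef, card_compl, card_image_of_injective _ φ.injective, card_univ,
      Fintype.card_fin, Fintype.card_fin]
  set W : Finset (Fin n) × Finset (Fin u) → ℕ :=
    fun p => (q - 1) ^ p.1.card * ∏ i ∈ p.2, (q - 1 - (s i : ℕ)) with hW
  set P : Finset (Finset (Fin n) × Finset (Fin u)) :=
    (N.powerset ×ˢ (univ : Finset (Fin u)).powerset).filter
      (fun p => p.1.card + p.2.card ≤ t) with hP
  -- step 1: the LHS equals the sum of W over P
  have e1 : ∀ j j1 : ℕ, (n - u).choose j1 * (q - 1) ^ j1 *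
        (∑ J ∈ Finset.powersetCard (j - j1) (univ : Finset (Fin u)),
          ∏ i ∈ J, (q - 1 - (s i : ℕ)))
      = ∑ p ∈ (powersetCard j1 N) ×ˢ (powersetCard (j - j1) univ), W p := by
    intro j j1
    rw [Finset.sum_product]
    have hin : ∀ B ∈ powersetCard j1 N,
        (∑ J ∈ powersetCard (j - j1) (univ : Finset (Fin u)), W (B, J))
        = (q - 1) ^ j1 * ∑ J ∈ powersetCard (j - j1) (univ : Finset (Fin u)),
            ∏ i ∈ J, (q - 1 - (s i : ℕ)) := by
      intro B hB
      rw [mem_powersetCard] at hB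
      rw [mul_sum]
      exact sum_congr rfl fun J _ => by rw [hW]; simp [hB.2]
    rw [sum_congr rfl hin, sum_const, smul_eq_mul, card_powersetCard, hN, mul_assoc]
  have hI : P = ((Finset.range (t + 1)).sigma (fun j => Finset.range (j + 1))).biUnion
      (fun x => (powersetCard x.2 N) ×ˢ (powersetCard (x.1 - x.2) (univ : Finset (Fin u)))) := by
    ext p
    rw [hP, mem_filter, mem_product, mem_powerset, mem_powerset, mem_biUnion]
    constructor
    · rintro ⟨⟨hBN, -⟩, hle⟩
      refine ⟨⟨p.1.card + p.2.card, p.1.card⟩, ?_, ?_⟩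
      · rw [mem_sigma, mem_range, mem_range]
        dsimp only
        constructor <;> omega
      · rw [mem_product, mem_powersetCard, mem_powersetCard]
        dsimp only
        exact ⟨⟨hBN, rfl⟩, ⟨subset_univ _, by omega⟩⟩
    · rintro ⟨⟨j, j1⟩, hx, hp⟩
      rw [mem_sigma, mem_range, mem_range] at hx
      rw [mem_product, mem_powersetCard, mem_powersetCard] at hp
      obtain ⟨⟨hBN, hBc⟩, -, hJc⟩ := hp
      exact ⟨⟨hBN, subset_univ _⟩, by omega⟩
  have hIdisj : ∀ x ∈ (Finset.range (t + 1)).sigma (fun j => Finset.range (j + 1)),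
      ∀ y ∈ (Finset.range (t + 1)).sigma (fun j => Finset.range (j + 1)), x ≠ y →
      Disjoint ((powersetCard x.2 N) ×ˢ (powersetCard (x.1 - x.2) (univ : Finset (Fin u))))
        ((powersetCard y.2 N) ×ˢ (powersetCard (y.1 - y.2) (univ : Finset (Fin u)))) := by
    rintro ⟨j, j1⟩ hx ⟨j', j1'⟩ hy hne
    simp only [mem_sigma, mem_range] at hx hy
    rw [Finset.disjoint_left]
    rintro ⟨B, J⟩ hp hp'
    simp only [mem_product, mem_powersetCard] at hp hp'
    apply hne
    obtain ⟨⟨-, hBc⟩, -, hJc⟩ := hp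
    obtain ⟨⟨-, hBc'⟩, -, hJc'⟩ := hp'
    have hj1 : j1 = j1' := by omega
    have hj : j = j' := by omega
    subst hj; subst hj1; rfl
  have hV : (∑ j ∈ Finset.range (t + 1), ∑ j1 ∈ Finset.range (j + 1),
        (n - u).choose j1 * (q - 1) ^ j1 *
          ∑ J ∈ Finset.powersetCard (j - j1) (Finset.univ : Finset (Fin u)),
            ∏ i ∈ J, (q - 1 - (s i : ℕ)))
      = ∑ p ∈ P, W p := by
    rw [hI, sum_biUnion hIdisj, Finset.sum_sigma]
    exact sum_congr rfl fun j _ => sum_congr rfl fun j1 _ => e1 j j1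
  -- step 2: sets of words realizing each pattern
  set Tp : Finset (Fin n) → Finset (Fin u) → Fin n → Finset (Fin q) := fun B J x =>
    (univ : Finset (Fin q)).filter (fun v =>
      (x ∈ B → v ≠ c x) ∧ (x ∈ N → x ∉ B → v = c x) ∧
      ∀ i, φ i = x → ((i ∈ J → ((s i : ℕ) ≤ (v : ℕ) ∧ v ≠ c x)) ∧ (i ∉ J → v = c x)))
    with hTp
  set Y : Finset (Fin n) × Finset (Fin u) → Finset (Fin n → Fin q) :=
    fun p => Fintype.piFinset (Tp p.1 p.2) with hY
  have hYcard : ∀ p ∈ P, (Y p).card = W p := by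
    rintro ⟨B, J⟩ hp
    rw [hP, mem_filter, mem_product, mem_powerset] at hp
    obtain ⟨⟨hBN, -⟩, -⟩ := hp
    rw [hY]
    dsimp only
    rw [Fintype.card_piFinset, ← prod_mul_prod_compl (univ.image φ), ← hNdef]
    have himg : ∀ i0 : Fin u, (Tp B J (φ i0)).card
        = if i0 ∈ J then q - 1 - (s i0 : ℕ) else 1 := by
      intro i0
      have hx : φ i0 ∉ N := by
        rw [hNdef, mem_compl, not_not]
        exact mem_image_of_mem φ (mem_univ i0)
      have hxB : φ i0 ∉ B := fun h => hx (hBN h)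
      have hTval : Tp B J (φ i0) = if i0 ∈ J
          then ((univ : Finset (Fin q)).filter
            fun v : Fin q => (s i0 : ℕ) ≤ (v : ℕ)).erase (c (φ i0))
          else {c (φ i0)} := by
        rw [hTp]
        dsimp only
        split_ifs with hiJ
        · ext v
          simp only [mem_filter, mem_univ, true_and, mem_erase]
          constructor
          · intro h
            exact ⟨((h.2.2 i0 rfl).1 hiJ).2, ((h.2.2 i0 rfl).1 hiJ).1⟩
          · intro h
            refine ⟨fun hB => absurd hB hxB, fun hN' => absurd hN' hx, ?_⟩
            intro i hi
            obtain rfl := φ.injective hi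
            exact ⟨fun _ => ⟨h.2, h.1⟩, fun hn => absurd hiJ hn⟩
        · ext v
          simp only [mem_filter, mem_univ, true_and, mem_singleton]
          constructor
          · intro h
            exact (h.2.2 i0 rfl).2 hiJ
          · intro h
            refine ⟨fun hB => absurd hB hxB, fun hN' => absurd hN' hx, ?_⟩
            intro i hi
            obtain rfl := φ.injective hi
            exact ⟨fun hiJ' => absurd hiJ' hiJ, fun _ => h⟩
      rw [hTval]
      split_ifs with hiJ
      · rw [card_erase_of_mem (by simp only [mem_filter, mem_univ, true_and]; exact hc i0),
          aux_filter_le_card]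
        omega
      · exact card_singleton _
    have hcompl : ∀ x ∈ N, (Tp B J x).card = if x ∈ B then q - 1 else 1 := by
      intro x hxN
      have hximg : ∀ i : Fin u, φ i ≠ x := by
        intro i hi
        rw [hNdef, mem_compl] at hxN
        exact hxN (hi ▸ mem_image_of_mem φ (mem_univ i))
      have hTval : Tp B J x = if x ∈ B then univ.erase (c x) else {c x} := by
        rw [hTp]
        dsimp only
        split_ifs with hxB
        · ext v
          simp only [mem_filter, mem_univ, true_and, mem_erase]
          constructor
          · intro h; exact ⟨h.1 hxB, trivial⟩
          · intro h
            exact ⟨fun _ => h.1, fun _ hB => absurd hxB hB,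
              fun i hi => absurd hi (hximg i)⟩
        · ext v
          simp only [mem_filter, mem_univ, true_and, mem_singleton]
          constructor
          · intro h; exact h.2.1 hxN hxB
          · intro h
            exact ⟨fun hB => absurd hB hxB, fun _ _ => h,
              fun i hi => absurd hi (hximg i)⟩
      rw [hTval]
      split_ifs with hxB
      · rw [card_erase_of_mem (mem_univ _), card_univ, Fintype.card_fin]
      · exact card_singleton _
    have hprod1 : ∏ x ∈ univ.image φ, (Tp B J x).card
        = ∏ i ∈ J, (q - 1 - (s i : ℕ)) := by
      rw [prod_image (fun a _ b _ h => φ.injective h), prod_congr rfl fun i _ => himg i,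
        prod_ite_mem, univ_inter]
    have hprod2 : ∏ x ∈ N, (Tp B J x).card = (q - 1) ^ B.card := by
      rw [prod_congr rfl hcompl, prod_ite_mem, inter_eq_right.mpr hBN, prod_const]
    rw [hprod1, hprod2, hW, mul_comm]
  have hYsub : ∀ p ∈ P, Y p ⊆ ((Finset.univ : Finset (Fin n → Fin q)).filter
      (fun y => (∀ i, (s i : ℕ) ≤ (y (φ i) : ℕ)) ∧ hammingDist y c ≤ t)) := by
    rintro ⟨B, J⟩ hp y hy
    rw [hP, mem_filter, mem_product, mem_powerset] at hp
    obtain ⟨⟨hBN, -⟩, hcard⟩ := hp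
    rw [hY, Fintype.mem_piFinset] at hy
    have hmem : ∀ x, (x ∈ B → y x ≠ c x) ∧ (x ∈ N → x ∉ B → y x = c x) ∧
        ∀ i, φ i = x → ((i ∈ J → ((s i : ℕ) ≤ (y x : ℕ) ∧ y x ≠ c x)) ∧
          (i ∉ J → y x = c x)) := by
      intro x
      have h := hy x
      rw [hTp] at h
      simpa using h
    rw [mem_filter]
    refine ⟨mem_univ _, ?_, ?_⟩
    · intro i
      rcases (hmem (φ i)).2.2 i rfl with ⟨h1, h2⟩
      by_cases hiJ : i ∈ J
      · exact (h1 hiJ).1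
      · rw [h2 hiJ]; exact hc i
    · have hsub : (univ.filter fun x => y x ≠ c x) ⊆ B ∪ J.image φ := by
        intro x hx
        rw [mem_filter] at hx
        rw [mem_union]
        by_cases hxN : x ∈ N
        · left
          by_contra hxB
          exact hx.2 ((hmem x).2.1 hxN hxB)
        · right
          rw [hNdef, mem_compl, not_not, mem_image] at hxN
          obtain ⟨i, -, hi⟩ := hxN
          rcases (hmem x).2.2 i hi with ⟨-, h2⟩
          refine mem_image.mpr ⟨i, ?_, hi⟩
          by_contra hiJ
          exact hx.2 (h2 hiJ)
      calc hammingDist y c ≤ (B ∪ J.image φ).card := by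
            unfold hammingDist
            exact card_le_card (by
              intro x hx
              apply hsub
              simp only [mem_filter, mem_univ, true_and]
              simpa using hx)
        _ ≤ B.card + (J.image φ).card := card_union_le _ _
        _ ≤ B.card + J.card := by
            have := card_image_le (s := J) (f := φ)
            omega
        _ ≤ t := hcard
  have hYdisj : ∀ p ∈ P, ∀ p' ∈ P, p ≠ p' → Disjoint (Y p) (Y p') := by
    rintro ⟨B, J⟩ hp ⟨B', J'⟩ hp' hne
    rw [hP, mem_filter, mem_product, mem_powerset] at hp hp'
    obtain ⟨⟨hBN, -⟩, -⟩ := hp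
    obtain ⟨⟨hBN', -⟩, -⟩ := hp'
    rw [Finset.disjoint_left]
    intro y hy hy'
    rw [hY, Fintype.mem_piFinset] at hy hy'
    have hmem : ∀ x, (x ∈ B → y x ≠ c x) ∧ (x ∈ N → x ∉ B → y x = c x) ∧
        ∀ i, φ i = x → ((i ∈ J → ((s i : ℕ) ≤ (y x : ℕ) ∧ y x ≠ c x)) ∧
          (i ∉ J → y x = c x)) := by
      intro x
      have h := hy x
      rw [hTp] at h
      simpa using h
    have hmem' : ∀ x, (x ∈ B' → y x ≠ c x) ∧ (x ∈ N → x ∉ B' → y x = c x) ∧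
        ∀ i, φ i = x → ((i ∈ J' → ((s i : ℕ) ≤ (y x : ℕ) ∧ y x ≠ c x)) ∧
          (i ∉ J' → y x = c x)) := by
      intro x
      have h := hy' x
      rw [hTp] at h
      simpa using h
    apply hne
    have hBeq : B = B' := by
      ext x
      constructor
      · intro hxB
        by_contra hxB'
        exact (hmem x).1 hxB ((hmem' x).2.1 (hBN hxB) hxB')
      · intro hxB'
        by_contra hxB
        exact (hmem' x).1 hxB' ((hmem x).2.1 (hBN' hxB') hxB)
    have hJeq : J = J' := by
      ext i
      constructor
      · intro hiJ
        by_contra hiJ'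
        exact (((hmem (φ i)).2.2 i rfl).1 hiJ).2 (((hmem' (φ i)).2.2 i rfl).2 hiJ')
      · intro hiJ'
        by_contra hiJ
        exact (((hmem' (φ i)).2.2 i rfl).1 hiJ').2 (((hmem (φ i)).2.2 i rfl).2 hiJ)
    rw [hBeq, hJeq]
  calc (∑ j ∈ Finset.range (t + 1), ∑ j1 ∈ Finset.range (j + 1),
        (n - u).choose j1 * (q - 1) ^ j1 *
          ∑ J ∈ Finset.powersetCard (j - j1) (Finset.univ : Finset (Fin u)),
            ∏ i ∈ J, (q - 1 - (s i : ℕ)))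
      = ∑ p ∈ P, W p := hV
    _ = ∑ p ∈ P, (Y p).card := (sum_congr rfl fun p hp => (hYcard p hp).symm)
    _ = (P.biUnion Y).card := (card_biUnion hYdisj).symm
    _ ≤ _ := card_le_card (biUnion_subset.mpr hYsub)

/-- Sphere-packing bound for partially-stuck-at masking codes, overlapping errors. -/
theorem stmt_7 (q n u t : ℕ) (φ : Fin u ↪ Fin n) (s : Fin u → Fin q)
    (hs : ∀ i, (s i : ℕ) < q - 1)
    (C : Finset (Fin n → Fin q))
    (hC : ∀ c ∈ C, ∀ i, (s i : ℕ) ≤ (c (φ i) : ℕ))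
    (hdisj : ∀ c ∈ C, ∀ c' ∈ C, c ≠ c' →
      Disjoint
        ((Finset.univ : Finset (Fin n → Fin q)).filter
          (fun y => (∀ i, (s i : ℕ) ≤ (y (φ i) : ℕ)) ∧ hammingDist y c ≤ t))
        ((Finset.univ : Finset (Fin n → Fin q)).filter
          (fun y => (∀ i, (s i : ℕ) ≤ (y (φ i) : ℕ)) ∧ hammingDist y c' ≤ t))) :
    C.card * ∑ j ∈ Finset.range (t + 1), ∑ j1 ∈ Finset.range (j + 1),
        (n - u).choose j1 * (q - 1) ^ j1 *
          ∑ J ∈ Finset.powersetCard (j - j1) (Finset.univ : Finset (Fin u)),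
            ∏ i ∈ J, (q - 1 - (s i : ℕ))
      ≤ q ^ (n - u) * ∏ i, (q - (s i : ℕ)) := by
  calc C.card * ∑ j ∈ Finset.range (t + 1), ∑ j1 ∈ Finset.range (j + 1),
        (n - u).choose j1 * (q - 1) ^ j1 *
          ∑ J ∈ Finset.powersetCard (j - j1) (Finset.univ : Finset (Fin u)),
            ∏ i ∈ J, (q - 1 - (s i : ℕ))
      = ∑ c ∈ C, ∑ j ∈ Finset.range (t + 1), ∑ j1 ∈ Finset.range (j + 1),
        (n - u).choose j1 * (q - 1) ^ j1 *
          ∑ J ∈ Finset.powersetCard (j - j1) (Finset.univ : Finset (Fin u)),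
            ∏ i ∈ J, (q - 1 - (s i : ℕ)) := by rw [sum_const, smul_eq_mul]
    _ ≤ ∑ c ∈ C, ((Finset.univ : Finset (Fin n → Fin q)).filter
          (fun y => (∀ i, (s i : ℕ) ≤ (y (φ i) : ℕ)) ∧ hammingDist y c ≤ t)).card :=
        sum_le_sum fun c hc => aux_ball_card q n u t φ s c (hC c hc)
    _ = (C.biUnion fun c => (Finset.univ : Finset (Fin n → Fin q)).filter
          (fun y => (∀ i, (s i : ℕ) ≤ (y (φ i) : ℕ)) ∧ hammingDist y c ≤ t)).card :=
        (card_biUnion hdisj).symm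
    _ ≤ ((Finset.univ : Finset (Fin n → Fin q)).filter
          (fun y => ∀ i, (s i : ℕ) ≤ (y (φ i) : ℕ))).card := by
        apply card_le_card
        apply biUnion_subset.mpr
        intro c _ y hy
        rw [mem_filter] at hy ⊢
        exact ⟨hy.1, hy.2.1⟩
    _ = q ^ (n - u) * ∏ i, (q - (s i : ℕ)) := aux_space_card q n u φ s
end
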